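/- arXiv:2311.16956 — 6 statements merged into one kernel-verified Lean document; each statement's English description precedes it below -/
import Mathlib

section
/- Let (d_k) and (c_k) be sequences of reals with d_k > 0 and c_k ≥ c > 0 for all k, satisfying d_{k+1} ≤ d_k · exp(−c_k · d_k) for all k ∈ ℕ. Then there exists k₀ ∈ ℕ such that for all k > k₀, d_k ≤ 2·log(2)/(c·(k − k₀)). -/
theorem stmt_2 (d c : ℕ → ℝ) (cbar : ℝ)
    (hd : ∀ k, 0 < d k) (hc : ∀ k, cbar ≤ c k) (hcbar : 0 < cbar)
    (hrec : ∀ k, d (k + 1) ≤ d k * Real.exp (-(c k * d k))) :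
    ∃ k₀ : ℕ, ∀ k : ℕ, k₀ < k →
      d k ≤ 2 * Real.log 2 / (cbar * ((k : ℝ) - (k₀ : ℝ))) := by
  have key : ∀ k : ℕ, cbar * k ≤ 1 / d k - 1 / d 0 := by
    intro k
    induction k with
    | zero => simp
    | succ n ih =>
      have hdn := hd n
      have hdn1 := hd (n + 1)
      have step : d (n + 1) ≤ d n / (1 + cbar * d n) := by
        have h1 : d (n + 1) ≤ d n * Real.exp (-(cbar * d n)) := by
          refine (hrec n).trans ?_
          have : Real.exp (-(c n * d n)) ≤ Real.exp (-(cbar * d n)) := by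
            apply Real.exp_le_exp.mpr
            nlinarith [hc n]
          nlinarith [Real.exp_pos (-(c n * d n))]
        have h2 : Real.exp (-(cbar * d n)) ≤ 1 / (1 + cbar * d n) := by
          rw [Real.exp_neg]
          have hpos : (0:ℝ) < 1 + cbar * d n := by nlinarith
          rw [inv_eq_one_div, div_le_div_iff₀ (Real.exp_pos _) hpos]
          have := Real.add_one_le_exp (cbar * d n)
          nlinarith
        calc d (n + 1) ≤ d n * Real.exp (-(cbar * d n)) := h1
          _ ≤ d n * (1 / (1 + cbar * d n)) := by nlinarith
          _ = d n / (1 + cbar * d n) := by ring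
      have hpos : (0:ℝ) < 1 + cbar * d n := by nlinarith
      have inv_step : 1 / d n + cbar ≤ 1 / d (n + 1) := by
        rw [div_add' _ _ _ (ne_of_gt hdn), div_le_div_iff₀ hdn hdn1]
        calc (1 + cbar * d n) * d (n + 1) ≤ (1 + cbar * d n) * (d n / (1 + cbar * d n)) := by
              nlinarith
          _ = d n := by field_simp
          _ = 1 * d n := by ring
      push_cast
      linarith
  refine ⟨0, fun k hk => ?_⟩
  have hk1 : (1:ℝ) ≤ (k:ℝ) := by exact_mod_cast hk
  have hkpos : (0:ℝ) < (k:ℝ) := by linarith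
  have h1 : cbar * k ≤ 1 / d k := by
    have := key k
    have : (0:ℝ) < 1 / d 0 := div_pos one_pos (hd 0)
    linarith [key k]
  have hdk := hd k
  have hdk_le : d k ≤ 1 / (cbar * k) := by
    rw [le_div_iff₀ (by positivity)]
    rw [le_div_iff₀ hdk] at h1
    linarith
  have hlog : (1:ℝ) ≤ 2 * Real.log 2 := by
    nlinarith [Real.log_two_gt_d9]
  have : ((0:ℕ):ℝ) = 0 := by norm_num
  rw [this, sub_zero]
  calc d k ≤ 1 / (cbar * k) := hdk_le
    _ ≤ 2 * Real.log 2 / (cbar * (k:ℝ)) := by gcongr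
end

section
/- Let ξ be a random variable taking values in a finite set indexing convex, L_ξ-smooth differentiable functions f_ξ : X → ℝ with L_ξ ≤ Lmax, and let F = E[f_ξ] have minimizer w⋆. Then for every w, E[‖f_ξ'(w)‖²] ≤ 4·Lmax·(F(w) − F(w⋆)) + 2·E[‖f_ξ'(w⋆)‖²]. -/
open InnerProductSpace Set

section Helpers

variable {X : Type*} [NormedAddCommGroup X] [InnerProductSpace ℝ X] [CompleteSpace X]

lemma myLineDeriv {f : X → ℝ} {g : X → X} (hg : ∀ x, HasGradientAt f (g x) x)
    (x d : X) (t : ℝ) :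
    HasDerivAt (fun s : ℝ => f (x + s • d)) (inner ℝ (g (x + t • d)) d : ℝ) t := by
  have hline : HasDerivAt (fun s : ℝ => x + s • d) d t := by
    simpa using ((hasDerivAt_id t).smul_const d).const_add x
  have := ((hg (x + t • d)).hasFDerivAt.comp_hasDerivAt t hline)
  simp [InnerProductSpace.toDual_apply_apply] at this; exact this

/-- Descent lemma for functions with Lipschitz gradient. -/
lemma myDescent {f : X → ℝ} {g : X → X} (hg : ∀ x, HasGradientAt f (g x) x)
    {L : ℝ} (hlip : ∀ a b, ‖g a - g b‖ ≤ L * ‖a - b‖) (x y : X) :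
    f y ≤ f x + inner ℝ (g x) (y - x) + L / 2 * ‖y - x‖ ^ 2 := by
  set d := y - x with hd
  set φ : ℝ → ℝ := fun t => f (x + t • d) - t * inner ℝ (g x) d - L * t ^ 2 / 2 * ‖d‖ ^ 2
    with hφ
  have hderiv : ∀ t : ℝ, HasDerivAt φ
      ((inner ℝ (g (x + t • d)) d : ℝ) - inner ℝ (g x) d - L * t * ‖d‖ ^ 2) t := by
    intro t
    have h1 := myLineDeriv hg x d t
    have h2 : HasDerivAt (fun s : ℝ => s * (inner ℝ (g x) d : ℝ)) (inner ℝ (g x) d : ℝ) t := by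
      simpa using (hasDerivAt_id t).mul_const (inner ℝ (g x) d : ℝ)
    have h3 : HasDerivAt (fun s : ℝ => L * s ^ 2 / 2 * ‖d‖ ^ 2) (L * t * ‖d‖ ^ 2) t := by
      have : HasDerivAt (fun s : ℝ => s ^ 2) (2 * t) t := by
        simpa using hasDerivAt_pow 2 t
      have := ((this.const_mul L).div_const 2).mul_const (‖d‖ ^ 2)
      exact this.congr_deriv (by ring)
    exact (h1.sub h2).sub h3
  have hmono : AntitoneOn φ (Icc (0:ℝ) 1) := by
    apply antitoneOn_of_deriv_nonpos (convex_Icc 0 1)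
    · exact fun t _ => ((hderiv t).differentiableAt).continuousAt.continuousWithinAt
    · exact fun t _ => ((hderiv t).differentiableAt).differentiableWithinAt
    · intro t ht
      rw [interior_Icc] at ht
      rw [(hderiv t).deriv]
      have key : (inner ℝ (g (x + t • d)) d : ℝ) - inner ℝ (g x) d ≤ L * t * ‖d‖ ^ 2 := by
        have h1 : (inner ℝ (g (x + t • d)) d : ℝ) - inner ℝ (g x) d
            = inner ℝ (g (x + t • d) - g x) d := by rw [inner_sub_left]
        rw [h1]
        calc (inner ℝ (g (x + t • d) - g x) d : ℝ) ≤ ‖g (x + t • d) - g x‖ * ‖d‖ :=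
              real_inner_le_norm _ _
          _ ≤ (L * ‖(x + t • d) - x‖) * ‖d‖ :=
              mul_le_mul_of_nonneg_right (hlip _ _) (norm_nonneg d)
          _ = L * t * ‖d‖ ^ 2 := by
              simp [norm_smul, abs_of_pos ht.1]; ring
      linarith
  have h01 := hmono (Set.left_mem_Icc.2 one_pos.le) (Set.right_mem_Icc.2 one_pos.le) one_pos.le
  have e0 : φ 0 = f x := by simp [hφ]
  have e1 : φ 1 = f y - inner ℝ (g x) d - L / 2 * ‖d‖ ^ 2 := by
    simp [hφ, hd]
  rw [e0, e1] at h01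
  linarith

/-- First-order lower bound for convex functions (monotone gradient). -/
lemma myConvexLB {f : X → ℝ} {g : X → X} (hg : ∀ x, HasGradientAt f (g x) x)
    (hmono : ∀ a b, (0:ℝ) ≤ inner ℝ (g a - g b) (a - b)) (x y : X) :
    f x + inner ℝ (g x) (y - x) ≤ f y := by
  set d := y - x with hd
  set ψ : ℝ → ℝ := fun t => f (x + t • d) - t * inner ℝ (g x) d with hψ
  have hderiv : ∀ t : ℝ, HasDerivAt ψ
      ((inner ℝ (g (x + t • d)) d : ℝ) - inner ℝ (g x) d) t := by
    intro t
    have h1 := myLineDeriv hg x d t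
    have h2 : HasDerivAt (fun s : ℝ => s * (inner ℝ (g x) d : ℝ)) (inner ℝ (g x) d : ℝ) t := by
      simpa using (hasDerivAt_id t).mul_const (inner ℝ (g x) d : ℝ)
    exact h1.sub h2
  have hmono' : MonotoneOn ψ (Icc (0:ℝ) 1) := by
    apply monotoneOn_of_deriv_nonneg (convex_Icc 0 1)
    · exact fun t _ => ((hderiv t).differentiableAt).continuousAt.continuousWithinAt
    · exact fun t _ => ((hderiv t).differentiableAt).differentiableWithinAt
    · intro t ht
      rw [interior_Icc] at ht
      rw [(hderiv t).deriv]
      have h1 : (inner ℝ (g (x + t • d)) d : ℝ) - inner ℝ (g x) d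
          = inner ℝ (g (x + t • d) - g x) d := by rw [inner_sub_left]
      have h2 := hmono (x + t • d) x
      have h3 : (x + t • d) - x = t • d := by abel
      rw [h3, real_inner_smul_right] at h2
      have h4 : (0:ℝ) ≤ inner ℝ (g (x + t • d) - g x) d :=
        nonneg_of_mul_nonneg_right (by linarith [h2]) ht.1
      linarith [h1 ▸ h4]
  have h01 := hmono' (Set.left_mem_Icc.2 one_pos.le) (Set.right_mem_Icc.2 one_pos.le) one_pos.le
  have e0 : ψ 0 = f x := by simp [hψ]
  have e1 : ψ 1 = f y - inner ℝ (g x) d := by simp [hψ, hd]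
  rw [e0, e1] at h01
  linarith

/-- Bregman / cocoercivity bound for convex smooth functions. -/
lemma myBregman {f : X → ℝ} {g : X → X} (hg : ∀ x, HasGradientAt f (g x) x)
    (hmono : ∀ a b, (0:ℝ) ≤ inner ℝ (g a - g b) (a - b))
    {L : ℝ} (hL : 0 < L) (hlip : ∀ a b, ‖g a - g b‖ ≤ L * ‖a - b‖) (v w : X) :
    ‖g w - g v‖ ^ 2 ≤ 2 * L * (f w - f v - inner ℝ (g v) (w - v)) := by
  set h : X → ℝ := fun x => f x - inner ℝ (g v) x with hh
  set gh : X → X := fun x => g x - g v with hgh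
  have hgh_grad : ∀ x, HasGradientAt h (gh x) x := by
    intro x
    rw [hasGradientAt_iff_hasFDerivAt]
    have h1 := (hg x).hasFDerivAt
    have h2 : HasFDerivAt (fun y : X => (inner ℝ (g v) y : ℝ)) (toDual ℝ X (g v)) x := by
      convert (toDual ℝ X (g v)).hasFDerivAt (x := x) using 1; ext y; simp [InnerProductSpace.toDual_apply_apply]
    have := h1.sub h2
    simp only [hgh, map_sub]; exact this
  have hgh_sub : ∀ a b, gh a - gh b = g a - g b := by
    intro a b; simp only [hgh]; abel
  have hgh_mono : ∀ a b, (0:ℝ) ≤ inner ℝ (gh a - gh b) (a - b) := by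
    intro a b; rw [hgh_sub]; exact hmono a b
  have hgh_lip : ∀ a b, ‖gh a - gh b‖ ≤ L * ‖a - b‖ := by
    intro a b; rw [hgh_sub]; exact hlip a b
  have hvmin : ∀ z : X, h v ≤ h z := by
    intro z
    have := myConvexLB hgh_grad hgh_mono v z
    simpa [hgh, sub_self] using this
  set y : X := w - L⁻¹ • gh w with hy
  have hd := myDescent hgh_grad hgh_lip w y
  have hyw : y - w = -(L⁻¹ • gh w) := by rw [hy]; abel
  have e1 : (inner ℝ (gh w) (y - w) : ℝ) = -(L⁻¹ * ‖gh w‖ ^ 2) := by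
    rw [hyw, inner_neg_right, real_inner_smul_right, real_inner_self_eq_norm_sq]
  have e2 : ‖y - w‖ ^ 2 = L⁻¹ ^ 2 * ‖gh w‖ ^ 2 := by
    rw [hyw, norm_neg, norm_smul]
    rw [mul_pow, Real.norm_eq_abs, sq_abs]
  rw [e1, e2] at hd
  have hv := hvmin y
  have hL' : L ≠ 0 := ne_of_gt hL
  have key : ‖gh w‖ ^ 2 ≤ 2 * L * (h w - h v) := by
    have : h v ≤ h w - L⁻¹ * ‖gh w‖ ^ 2 + L / 2 * (L⁻¹ ^ 2 * ‖gh w‖ ^ 2) := le_trans hv hd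
    have hfe : L / 2 * (L⁻¹ ^ 2 * ‖gh w‖ ^ 2) = 1 / (2 * L) * ‖gh w‖ ^ 2 := by
      field_simp
    rw [hfe] at this
    have h2 : L⁻¹ * ‖gh w‖ ^ 2 - 1 / (2 * L) * ‖gh w‖ ^ 2 = 1 / (2 * L) * ‖gh w‖ ^ 2 := by
      field_simp; ring
    have h3 : 1 / (2 * L) * ‖gh w‖ ^ 2 ≤ h w - h v := by linarith
    have h4 := mul_le_mul_of_nonneg_left h3 (by positivity : (0:ℝ) ≤ 2 * L)
    have h5 : 2 * L * (1 / (2 * L) * ‖gh w‖ ^ 2) = ‖gh w‖ ^ 2 := by field_simp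
    rw [h5] at h4; exact h4
  have e3 : h w - h v = f w - f v - inner ℝ (g v) (w - v) := by
    simp [hh, inner_sub_right]; ring
  have e4 : gh w = g w - g v := rfl
  rw [e3] at key; rw [← e4]; exact key

end Helpers

theorem stmt_6 {X : Type*} [NormedAddCommGroup X] [InnerProductSpace ℝ X] [CompleteSpace X]
    {ι : Type*} [Fintype ι] (p : ι → ℝ) (hp : ∀ i, 0 ≤ p i) (hp1 : ∑ i, p i = 1)
    (f : ι → X → ℝ) (f' : ι → X → X) (Lξ : ι → ℝ) (Lmax : ℝ)
    (hgrad : ∀ i w, HasGradientAt (f i) (f' i w) w)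
    (hconv : ∀ i (w₁ w₂ : X), (0 : ℝ) ≤ inner ℝ (f' i w₁ - f' i w₂) (w₁ - w₂))
    (hsmooth : ∀ i (w₁ w₂ : X), ‖f' i w₁ - f' i w₂‖ ≤ Lξ i * ‖w₁ - w₂‖)
    (hLmax : ∀ i, Lξ i ≤ Lmax)
    (F : X → ℝ) (hF : ∀ w, F w = ∑ i, p i * f i w)
    (wstar : X) (hmin : ∀ w, F wstar ≤ F w) :
    ∀ w : X, ∑ i, p i * ‖f' i w‖ ^ 2 ≤
      4 * Lmax * (F w - F wstar) + 2 * ∑ i, p i * ‖f' i wstar‖ ^ 2 := by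
  intro w
  -- F has gradient ∑ i, p i • f' i u
  have hFgrad : ∀ u : X, HasGradientAt F (∑ i, p i • f' i u) u := by
    intro u
    rw [hasGradientAt_iff_hasFDerivAt]
    have hsum : HasFDerivAt (fun x => ∑ i, p i * f i x)
        (∑ i, p i • InnerProductSpace.toDual ℝ X (f' i u)) u :=
      HasFDerivAt.fun_sum (fun i _ => ((hgrad i u).hasFDerivAt.const_mul (p i)))
    have hFe : F = fun x => ∑ i, p i * f i x := funext hF
    rw [map_sum]
    simp_rw [map_smul]
    rw [hFe]; exact hsum
  -- the gradient of F at the minimizer vanishes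
  have hzero : (∑ i, p i • f' i wstar) = 0 := by
    have hloc : IsLocalMin F wstar := Filter.Eventually.of_forall hmin
    have h1 := hloc.hasFDerivAt_eq_zero (hFgrad wstar).hasFDerivAt
    have h0 : InnerProductSpace.toDual ℝ X (∑ i, p i • f' i wstar)
        = InnerProductSpace.toDual ℝ X 0 := by rw [map_zero]; exact h1
    exact (InnerProductSpace.toDual ℝ X).injective h0
  set D : ι → ℝ := fun i => f i w - f i wstar - inner ℝ (f' i wstar) (w - wstar) with hD
  have hinner : (inner ℝ (∑ i, p i • f' i wstar) (w - wstar) : ℝ)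
      = ∑ i, p i * inner ℝ (f' i wstar) (w - wstar) := by
    rw [sum_inner]
    exact Finset.sum_congr rfl fun i _ => real_inner_smul_left _ _ _
  have hsumD : ∑ i, p i * D i = F w - F wstar := by
    have h0 : (inner ℝ (∑ i, p i • f' i wstar) (w - wstar) : ℝ) = 0 := by
      rw [hzero, inner_zero_left]
    rw [hinner] at h0
    rw [hF w, hF wstar]
    have expand : ∀ i ∈ Finset.univ (α := ι),
        p i * D i = p i * f i w - p i * f i wstar
          - p i * inner ℝ (f' i wstar) (w - wstar) := fun i _ => by simp only [hD]; ring
    rw [Finset.sum_congr rfl expand, Finset.sum_sub_distrib, Finset.sum_sub_distrib, h0]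
    ring
  by_cases hLpos : 0 < Lmax
  · -- main case
    have hlipmax : ∀ i (a b : X), ‖f' i a - f' i b‖ ≤ Lmax * ‖a - b‖ := fun i a b =>
      le_trans (hsmooth i a b) (mul_le_mul_of_nonneg_right (hLmax i) (norm_nonneg _))
    have hbreg : ∀ i, ‖f' i w - f' i wstar‖ ^ 2 ≤ 2 * Lmax * D i := fun i =>
      myBregman (hgrad i) (hconv i) hLpos (hlipmax i) wstar w
    have hpt : ∀ i, ‖f' i w‖ ^ 2 ≤ 4 * Lmax * D i + 2 * ‖f' i wstar‖ ^ 2 := by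
      intro i
      have htri : ‖f' i w‖ ≤ ‖f' i w - f' i wstar‖ + ‖f' i wstar‖ := by
        calc ‖f' i w‖ = ‖(f' i w - f' i wstar) + f' i wstar‖ := by rw [sub_add_cancel]
          _ ≤ _ := norm_add_le _ _
      nlinarith [hbreg i, sq_nonneg (‖f' i w - f' i wstar‖ - ‖f' i wstar‖),
        norm_nonneg (f' i w), norm_nonneg (f' i wstar), norm_nonneg (f' i w - f' i wstar)]
    have hsum : ∑ i, p i * ‖f' i w‖ ^ 2
        ≤ ∑ i, p i * (4 * Lmax * D i + 2 * ‖f' i wstar‖ ^ 2) :=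
      Finset.sum_le_sum fun i _ => mul_le_mul_of_nonneg_left (hpt i) (hp i)
    have hre : ∑ i, p i * (4 * Lmax * D i + 2 * ‖f' i wstar‖ ^ 2)
        = 4 * Lmax * ∑ i, p i * D i + 2 * ∑ i, p i * ‖f' i wstar‖ ^ 2 := by
      rw [Finset.mul_sum, Finset.mul_sum, ← Finset.sum_add_distrib]
      exact Finset.sum_congr rfl fun i _ => by ring
    rw [hre, hsumD] at hsum
    exact hsum
  · -- degenerate case: Lmax ≤ 0, so all gradients are constant
    push_neg at hLpos
    have hconst : ∀ i (a b : X), f' i a = f' i b := by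
      intro i a b
      have h1 := hsmooth i a b
      have h2 : Lξ i * ‖a - b‖ ≤ 0 :=
        mul_nonpos_of_nonpos_of_nonneg (le_trans (hLmax i) hLpos) (norm_nonneg _)
      have h3 : ‖f' i a - f' i b‖ = 0 := le_antisymm (le_trans h1 h2) (norm_nonneg _)
      rwa [norm_eq_zero, sub_eq_zero] at h3
    have hD0 : ∀ i, D i = 0 := by
      intro i
      have lb1 := myConvexLB (hgrad i) (hconv i) wstar w
      have lb2 := myConvexLB (hgrad i) (hconv i) w wstar
      have he : f' i w = f' i wstar := hconst i w wstar
      rw [he] at lb2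
      have hflip : (inner ℝ (f' i wstar) (wstar - w) : ℝ)
          = - inner ℝ (f' i wstar) (w - wstar) := by
        rw [← inner_neg_right]; congr 1; abel
      rw [hflip] at lb2
      simp only [hD]; linarith
    have hFw : F w - F wstar = 0 := by rw [← hsumD]; simp [hD0]
    have hLHS : ∑ i, p i * ‖f' i w‖ ^ 2 = ∑ i, p i * ‖f' i wstar‖ ^ 2 :=
      Finset.sum_congr rfl fun i _ => by rw [hconst i w wstar]
    have hnn : 0 ≤ ∑ i, p i * ‖f' i wstar‖ ^ 2 :=
      Finset.sum_nonneg fun i _ => mul_nonneg (hp i) (sq_nonneg _)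
    rw [hLHS, hFw]
    linarith
end

section
/- Under the same setting, the variance Var(f_ξ'(w)) := E[‖f_ξ'(w) − F'(w)‖²] satisfies Var(f_ξ'(w)) ≤ 4·Lmax·⟨F'(w), w − w⋆⟩ + 2·E[‖f_ξ'(w⋆)‖²] − ‖F'(w)‖². -/
open InnerProductSpace Set

section Aux

variable {X : Type*} [NormedAddCommGroup X] [InnerProductSpace ℝ X] [CompleteSpace X]

local notation "⟪" x ", " y "⟫" => @inner ℝ _ _ x y

private lemma line_deriv' {g : X → ℝ} {G : X → X} (hg : ∀ z, HasGradientAt g (G z) z)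
    (x v : X) (t : ℝ) :
    HasDerivAt (fun t : ℝ => g (x + t • v)) ⟪G (x + t • v), v⟫ t := by
  have h1 : HasDerivAt (fun t : ℝ => x + t • v) v t := by
    simpa using ((hasDerivAt_id t).smul_const v).const_add x
  have h2 := (hasGradientAt_iff_hasFDerivAt.1 (hg (x + t • v))).comp_hasDerivAt t h1
  simpa [toDual_apply_apply, Function.comp_def] using h2

/-- first-order convexity from monotone gradient -/
private lemma grad_ineq' {g : X → ℝ} {G : X → X} (hg : ∀ z, HasGradientAt g (G z) z)
    (hmono : ∀ a b : X, 0 ≤ ⟪G a - G b, a - b⟫) (x y : X) :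
    g x + ⟪G x, y - x⟫ ≤ g y := by
  set v := y - x with hv
  set φ : ℝ → ℝ := fun t => g (x + t • v) - t * ⟪G x, v⟫ with hφ
  have hd : ∀ t : ℝ, HasDerivAt φ (⟪G (x + t • v), v⟫ - ⟪G x, v⟫) t := by
    intro t
    exact (line_deriv' hg x v t).sub (hasDerivAt_mul_const _)
  have hdiff : Differentiable ℝ φ := fun t => (hd t).differentiableAt
  have hmonoOn : MonotoneOn φ (Icc (0:ℝ) 1) := by
    apply monotoneOn_of_deriv_nonneg (convex_Icc 0 1) hdiff.continuous.continuousOn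
      (hdiff.differentiableOn)
    intro t ht
    rw [interior_Icc] at ht
    rw [(hd t).deriv]
    have h0 : (0:ℝ) ≤ ⟪G (x + t • v) - G x, t • v⟫ := by
      have := hmono (x + t • v) x
      simpa using this
    rw [inner_smul_right] at h0
    have ht0 : 0 < t := ht.1
    have : 0 ≤ ⟪G (x + t • v) - G x, v⟫ := nonneg_of_mul_nonneg_right h0 ht0
    rw [inner_sub_left] at this
    linarith
  have h01 := hmonoOn (left_mem_Icc.2 one_pos.le) (right_mem_Icc.2 one_pos.le) one_pos.le
  simp only [hφ, zero_smul, add_zero, one_smul, zero_mul, sub_zero, one_mul] at h01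
  have : x + v = y := by rw [hv]; abel
  rw [this] at h01
  linarith

/-- descent lemma -/
private lemma descent_lemma' {g : X → ℝ} {G : X → X} {L : ℝ}
    (hg : ∀ z, HasGradientAt g (G z) z)
    (hlip : ∀ a b : X, ‖G a - G b‖ ≤ L * ‖a - b‖) (x y : X) :
    g y ≤ g x + ⟪G x, y - x⟫ + L / 2 * ‖y - x‖ ^ 2 := by
  set v := y - x with hv
  set φ : ℝ → ℝ := fun t => g (x + t • v) - t * ⟪G x, v⟫ - L / 2 * t ^ 2 * ‖v‖ ^ 2 with hφ
  have hd : ∀ t : ℝ, HasDerivAt φ (⟪G (x + t • v), v⟫ - ⟪G x, v⟫ - L * t * ‖v‖ ^ 2) t := by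
    intro t
    have h1 : HasDerivAt (fun t : ℝ => L / 2 * t ^ 2 * ‖v‖ ^ 2) (L * t * ‖v‖ ^ 2) t := by
      have := ((hasDerivAt_pow 2 t).const_mul (L / 2)).mul_const (‖v‖ ^ 2)
      convert this using 1
      · rfl
      · rfl
      ring
    exact ((line_deriv' hg x v t).sub (hasDerivAt_mul_const _)).sub h1
  have hdiff : Differentiable ℝ φ := fun t => (hd t).differentiableAt
  have hanti : AntitoneOn φ (Icc (0:ℝ) 1) := by
    apply antitoneOn_of_deriv_nonpos (convex_Icc 0 1) hdiff.continuous.continuousOn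
      hdiff.differentiableOn
    intro t ht
    rw [interior_Icc] at ht
    rw [(hd t).deriv]
    have h1 : ⟪G (x + t • v) - G x, v⟫ ≤ ‖G (x + t • v) - G x‖ * ‖v‖ :=
      real_inner_le_norm _ _
    have h2 : ‖G (x + t • v) - G x‖ ≤ L * (t * ‖v‖) := by
      have := hlip (x + t • v) x
      simpa [norm_smul, abs_of_pos ht.1] using this
    have h3 : ⟪G (x + t • v), v⟫ - ⟪G x, v⟫ ≤ L * t * ‖v‖ ^ 2 := by
      rw [← inner_sub_left]
      calc ⟪G (x + t • v) - G x, v⟫ ≤ ‖G (x + t • v) - G x‖ * ‖v‖ := h1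
        _ ≤ L * (t * ‖v‖) * ‖v‖ := by
            apply mul_le_mul_of_nonneg_right h2 (norm_nonneg _)
        _ = L * t * ‖v‖ ^ 2 := by ring
    linarith
  have h01 := hanti (left_mem_Icc.2 one_pos.le) (right_mem_Icc.2 one_pos.le) one_pos.le
  simp only [hφ, zero_smul, add_zero, one_smul, zero_mul, sub_zero, one_mul, one_pow,
    mul_one, zero_pow, mul_zero] at h01
  have hxy : x + v = y := by rw [hv]; abel
  rw [hxy] at h01
  linarith [h01]

/-- Bregman cocoercivity -/
private lemma bregman_coco' {g : X → ℝ} {G : X → X} {L : ℝ} (hL : 0 < L)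
    (hg : ∀ z, HasGradientAt g (G z) z)
    (hmono : ∀ a b : X, 0 ≤ ⟪G a - G b, a - b⟫)
    (hlip : ∀ a b : X, ‖G a - G b‖ ≤ L * ‖a - b‖) (x y : X) :
    ‖G x - G y‖ ^ 2 ≤ 2 * L * (g x - g y - ⟪G y, x - y⟫) := by
  set h : X → ℝ := fun z => g z - ⟪G y, z⟫ with hh
  set H : X → X := fun z => G z - G y with hH
  have hgh : ∀ z, HasGradientAt h (H z) z := by
    intro z
    rw [hasGradientAt_iff_hasFDerivAt]
    have h1 : HasFDerivAt (fun z : X => (⟪G y, z⟫ : ℝ)) (toDual ℝ X (G y)) z :=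
      (toDual ℝ X (G y)).hasFDerivAt
    have h2 := (hasGradientAt_iff_hasFDerivAt.1 (hg z)).sub h1
    convert h2 using 1
    · rfl
    · rfl
    · rfl
    simp [hH, map_sub]
  have hmonoH : ∀ a b : X, 0 ≤ ⟪H a - H b, a - b⟫ := by
    intro a b; simpa [hH, sub_sub_sub_cancel_right] using hmono a b
  have hlipH : ∀ a b : X, ‖H a - H b‖ ≤ L * ‖a - b‖ := by
    intro a b; simpa [hH, sub_sub_sub_cancel_right] using hlip a b
  set u : X := x - L⁻¹ • H x with hu
  have hmin : h y ≤ h u := by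
    have := grad_ineq' hgh hmonoH y u
    simpa [hH] using this
  have hdesc : h u ≤ h x - 1 / (2 * L) * ‖H x‖ ^ 2 := by
    have := descent_lemma' hgh hlipH x u
    have hux : u - x = -(L⁻¹ • H x) := by rw [hu]; abel
    rw [hux] at this
    rw [inner_neg_right, inner_smul_right, real_inner_self_eq_norm_sq] at this
    rw [norm_neg, norm_smul, Real.norm_eq_abs, abs_of_pos (inv_pos.2 hL)] at this
    have heq : h x + -(L⁻¹ * ‖H x‖ ^ 2) + L / 2 * (L⁻¹ * ‖H x‖) ^ 2
        = h x - 1 / (2 * L) * ‖H x‖ ^ 2 := by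
      field_simp
      ring
    linarith [this, heq.le, heq.ge]
  have hfin : ‖H x‖ ^ 2 ≤ 2 * L * (h x - h y) := by
    have := hmin.trans hdesc
    have h2L : 0 < 2 * L := by linarith
    have h1 : 1 / (2 * L) * ‖H x‖ ^ 2 ≤ h x - h y := by linarith
    have h2 := mul_le_mul_of_nonneg_left h1 h2L.le
    have h3 : 2 * L * (1 / (2 * L) * ‖H x‖ ^ 2) = ‖H x‖ ^ 2 := by
      field_simp
    calc ‖H x‖ ^ 2 = 2 * L * (1 / (2 * L) * ‖H x‖ ^ 2) := h3.symm
      _ ≤ 2 * L * (h x - h y) := h2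
  calc ‖G x - G y‖ ^ 2 = ‖H x‖ ^ 2 := by rw [hH]
    _ ≤ 2 * L * (h x - h y) := hfin
    _ = 2 * L * (g x - g y - ⟪G y, x - y⟫) := by
        rw [hh]; simp only [inner_sub_right]; ring

end Aux

theorem stmt_7 {X : Type*} [NormedAddCommGroup X] [InnerProductSpace ℝ X] [CompleteSpace X]
    {ι : Type*} [Fintype ι] (p : ι → ℝ) (hp : ∀ i, 0 ≤ p i) (hp1 : ∑ i, p i = 1)
    (f : ι → X → ℝ) (f' : ι → X → X) (Lξ : ι → ℝ) (Lmax : ℝ)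
    (hgrad : ∀ i w, HasGradientAt (f i) (f' i w) w)
    (hconv : ∀ i (w₁ w₂ : X), (0 : ℝ) ≤ inner ℝ (f' i w₁ - f' i w₂) (w₁ - w₂))
    (hsmooth : ∀ i (w₁ w₂ : X), ‖f' i w₁ - f' i w₂‖ ≤ Lξ i * ‖w₁ - w₂‖)
    (hLmax : ∀ i, Lξ i ≤ Lmax)
    (F : X → ℝ) (hF : ∀ w, F w = ∑ i, p i * f i w)
    (F' : X → X) (hF' : ∀ w, F' w = ∑ i, p i • f' i w)
    (wstar : X) (hmin : ∀ w, F wstar ≤ F w) :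
    ∀ w : X, ∑ i, p i * ‖f' i w - F' w‖ ^ 2 ≤
      4 * Lmax * inner ℝ (F' w) (w - wstar) + 2 * ∑ i, p i * ‖f' i wstar‖ ^ 2
        - ‖F' w‖ ^ 2 := by
  intro w
  -- gradient of F
  have hFgrad : ∀ z, HasGradientAt F (F' z) z := by
    intro z
    have hFeq : F = fun w => ∑ i, p i * f i w := funext hF
    rw [hasGradientAt_iff_hasFDerivAt, hFeq]
    have h1 : HasFDerivAt (fun w => ∑ i, p i * f i w)
        (∑ i, p i • (toDual ℝ X (f' i z))) z := by
      apply HasFDerivAt.fun_sum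
      intro i _
      exact (hasGradientAt_iff_hasFDerivAt.1 (hgrad i z)).const_mul (p i)
    convert h1 using 1
    · rfl
    rw [hF' z, map_sum]
    simp [map_smul]
  -- F' wstar = 0
  have hF'0 : F' wstar = 0 := by
    have hloc : IsLocalMin F wstar := Filter.Eventually.of_forall hmin
    have h0 := hloc.hasFDerivAt_eq_zero (hasGradientAt_iff_hasFDerivAt.1 (hFgrad wstar))
    have := (toDual ℝ X).injective (by rw [h0, map_zero] : toDual ℝ X (F' wstar) = toDual ℝ X 0)
    exact this
  -- inner products: sum identity
  have hsum_inner : ∀ (u : X), ∑ i, p i * (inner ℝ (f' i wstar) u : ℝ) = inner ℝ (F' wstar) u := by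
    intro u
    rw [hF', sum_inner]
    congr 1; funext i; rw [real_inner_smul_left]
  -- shift identity
  have hFw : (inner ℝ (F' w) (F' w) : ℝ) = ‖F' w‖ ^ 2 := real_inner_self_eq_norm_sq _
  have hshift : ∑ i, p i * ‖f' i w - F' w‖ ^ 2
      = ∑ i, p i * ‖f' i w‖ ^ 2 - ‖F' w‖ ^ 2 := by
    have hs1 : ∑ i, p i * (inner ℝ (f' i w) (F' w) : ℝ) = ‖F' w‖ ^ 2 := by
      rw [← hFw]
      nth_rewrite 2 [hF']
      rw [sum_inner]
      congr 1; funext i; rw [real_inner_smul_left]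
    calc ∑ i, p i * ‖f' i w - F' w‖ ^ 2
        = ∑ i, (p i * ‖f' i w‖ ^ 2 - 2 * (p i * inner ℝ (f' i w) (F' w))
            + p i * ‖F' w‖ ^ 2) := by
          apply Finset.sum_congr rfl
          intro i _
          rw [norm_sub_sq_real]
          ring
      _ = ∑ i, p i * ‖f' i w‖ ^ 2 - 2 * ∑ i, (p i * inner ℝ (f' i w) (F' w))
            + (∑ i, p i) * ‖F' w‖ ^ 2 := by
          rw [Finset.sum_add_distrib, Finset.sum_sub_distrib, ← Finset.mul_sum,
            ← Finset.sum_mul]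
      _ = ∑ i, p i * ‖f' i w‖ ^ 2 - ‖F' w‖ ^ 2 := by
          rw [hs1, hp1]; ring
  rw [hshift]
  have hkey : ∑ i, p i * ‖f' i w‖ ^ 2 ≤
      4 * Lmax * inner ℝ (F' w) (w - wstar) + 2 * ∑ i, p i * ‖f' i wstar‖ ^ 2 := by
    by_cases hLpos : 0 < Lmax
    · -- main case
      have hlip : ∀ i (a b : X), ‖f' i a - f' i b‖ ≤ Lmax * ‖a - b‖ := fun i a b =>
        (hsmooth i a b).trans (mul_le_mul_of_nonneg_right (hLmax i) (norm_nonneg _))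
      have hcoco : ∀ i, ‖f' i w - f' i wstar‖ ^ 2 ≤
          2 * Lmax * (f i w - f i wstar - inner ℝ (f' i wstar) (w - wstar)) := fun i =>
        bregman_coco' hLpos (hgrad i) (hconv i) (hlip i) w wstar
      have hsumcoco : ∑ i, p i * ‖f' i w - f' i wstar‖ ^ 2 ≤
          2 * Lmax * (F w - F wstar) := by
        calc ∑ i, p i * ‖f' i w - f' i wstar‖ ^ 2
            ≤ ∑ i, p i * (2 * Lmax * (f i w - f i wstar - inner ℝ (f' i wstar) (w - wstar))) :=
              Finset.sum_le_sum fun i _ => mul_le_mul_of_nonneg_left (hcoco i) (hp i)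
          _ = 2 * Lmax * (∑ i, p i * f i w - ∑ i, p i * f i wstar
              - ∑ i, p i * inner ℝ (f' i wstar) (w - wstar)) := by
              have he : ∀ i : ι, p i * (2 * Lmax * (f i w - f i wstar
                  - inner ℝ (f' i wstar) (w - wstar)))
                  = 2 * Lmax * (p i * f i w) - 2 * Lmax * (p i * f i wstar)
                    - 2 * Lmax * (p i * inner ℝ (f' i wstar) (w - wstar)) := fun i => by ring
              rw [Finset.sum_congr rfl (fun i _ => he i), Finset.sum_sub_distrib,
                Finset.sum_sub_distrib, ← Finset.mul_sum, ← Finset.mul_sum, ← Finset.mul_sum]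
              ring
          _ = 2 * Lmax * (F w - F wstar) := by
              rw [hsum_inner, hF'0, ← hF, ← hF]
              simp
      have hconvF : F w - F wstar ≤ inner ℝ (F' w) (w - wstar) := by
        have hmonoF : ∀ a b : X, (0:ℝ) ≤ inner ℝ (F' a - F' b) (a - b) := by
          intro a b
          have : F' a - F' b = ∑ i, p i • (f' i a - f' i b) := by
            rw [hF', hF', ← Finset.sum_sub_distrib]
            apply Finset.sum_congr rfl
            intro i _
            rw [smul_sub]
          rw [this, sum_inner]
          apply Finset.sum_nonneg
          intro i _
          rw [real_inner_smul_left]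
          exact mul_nonneg (hp i) (hconv i a b)
        have := grad_ineq' hFgrad hmonoF w wstar
        have h2 : (inner ℝ (F' w) (wstar - w) : ℝ) = - inner ℝ (F' w) (w - wstar) := by
          rw [← inner_neg_right, neg_sub]
        rw [h2] at this
        linarith
      have hsq : ∀ i, ‖f' i w‖ ^ 2 ≤ 2 * ‖f' i w - f' i wstar‖ ^ 2 + 2 * ‖f' i wstar‖ ^ 2 := by
        intro i
        have h1 : ‖f' i w‖ ≤ ‖f' i w - f' i wstar‖ + ‖f' i wstar‖ := by
          calc ‖f' i w‖ = ‖(f' i w - f' i wstar) + f' i wstar‖ := by rw [sub_add_cancel]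
            _ ≤ ‖f' i w - f' i wstar‖ + ‖f' i wstar‖ := norm_add_le _ _
        nlinarith [sq_nonneg (‖f' i w - f' i wstar‖ - ‖f' i wstar‖), norm_nonneg (f' i w)]
      calc ∑ i, p i * ‖f' i w‖ ^ 2
          ≤ ∑ i, p i * (2 * ‖f' i w - f' i wstar‖ ^ 2 + 2 * ‖f' i wstar‖ ^ 2) :=
            Finset.sum_le_sum fun i _ => mul_le_mul_of_nonneg_left (hsq i) (hp i)
        _ = 2 * ∑ i, p i * ‖f' i w - f' i wstar‖ ^ 2 + 2 * ∑ i, p i * ‖f' i wstar‖ ^ 2 := by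
            rw [Finset.mul_sum, Finset.mul_sum, ← Finset.sum_add_distrib]
            apply Finset.sum_congr rfl
            intro i _
            ring
        _ ≤ 2 * (2 * Lmax * (F w - F wstar)) + 2 * ∑ i, p i * ‖f' i wstar‖ ^ 2 := by
            linarith [hsumcoco]
        _ ≤ 4 * Lmax * inner ℝ (F' w) (w - wstar) + 2 * ∑ i, p i * ‖f' i wstar‖ ^ 2 := by
            nlinarith [hconvF, hLpos]
    · -- Lmax ≤ 0 : all gradients are constant
      push_neg at hLpos
      have hconst : ∀ i (a b : X), f' i a = f' i b := by
        intro i a b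
        have h1 : ‖f' i a - f' i b‖ ≤ 0 := by
          have := hsmooth i a b
          have h2 : Lξ i * ‖a - b‖ ≤ 0 :=
            mul_nonpos_of_nonpos_of_nonneg ((hLmax i).trans hLpos) (norm_nonneg _)
          linarith
        rw [sub_eq_zero.1 (norm_le_zero_iff.1 h1)]
      have hF'w : F' w = 0 := by
        rw [hF']
        rw [← hF'0, hF']
        apply Finset.sum_congr rfl
        intro i _
        rw [hconst i w wstar]
      have hfw : ∀ i, f' i w = f' i wstar := fun i => hconst i w wstar
      have h1 : ∑ i, p i * ‖f' i w‖ ^ 2 = ∑ i, p i * ‖f' i wstar‖ ^ 2 := by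
        apply Finset.sum_congr rfl
        intro i _
        rw [hfw i]
      rw [h1, hF'w]
      have hnn : 0 ≤ ∑ i, p i * ‖f' i wstar‖ ^ 2 :=
        Finset.sum_nonneg fun i _ => mul_nonneg (hp i) (sq_nonneg _)
      simp only [inner_zero_left]
      linarith
  have hnorm : (0:ℝ) ≤ ‖F' w‖ ^ 2 := sq_nonneg _
  linarith
end

section
/- Let F be μ-strongly convex and L-smooth on ℝⁿ with minimizer w⋆, and f_ξ be L_ξ-smooth functions (over a finite probability space) with mean F. Then for all w, Var(f_ξ'(w)) ≤ (2·E[L_ξ²]/μ² − 1)·‖F'(w)‖² + 2·E[‖f_ξ'(w⋆)‖²]. -/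
theorem stmt_9 {n : ℕ}
    {ι : Type*} [Fintype ι] (p : ι → ℝ) (hp : ∀ i, 0 ≤ p i) (hp1 : ∑ i, p i = 1)
    (f : ι → EuclideanSpace ℝ (Fin n) → ℝ) (f' : ι → EuclideanSpace ℝ (Fin n) → EuclideanSpace ℝ (Fin n))
    (Lξ : ι → ℝ) (μ L : ℝ) (hμ : 0 < μ)
    (hgrad : ∀ i w, HasGradientAt (f i) (f' i w) w)
    (hsmoothξ : ∀ i (w₁ w₂ : EuclideanSpace ℝ (Fin n)), ‖f' i w₁ - f' i w₂‖ ≤ Lξ i * ‖w₁ - w₂‖)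
    (F : EuclideanSpace ℝ (Fin n) → ℝ) (hF : ∀ w, F w = ∑ i, p i * f i w)
    (F' : EuclideanSpace ℝ (Fin n) → EuclideanSpace ℝ (Fin n)) (hF' : ∀ w, F' w = ∑ i, p i • f' i w)
    (hsc : ∀ w₁ w₂, μ * ‖w₁ - w₂‖ ^ 2 ≤ inner ℝ (F' w₁ - F' w₂) (w₁ - w₂))
    (hsmooth : ∀ w₁ w₂, ‖F' w₁ - F' w₂‖ ≤ L * ‖w₁ - w₂‖)
    (wstar : EuclideanSpace ℝ (Fin n)) (hmin : ∀ w, F wstar ≤ F w) :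
    ∀ w, ∑ i, p i * ‖f' i w - F' w‖ ^ 2 ≤
      (2 * (∑ i, p i * (Lξ i) ^ 2) / μ ^ 2 - 1) * ‖F' w‖ ^ 2
        + 2 * ∑ i, p i * ‖f' i wstar‖ ^ 2 := by
  intro w
  -- F has gradient F' everywhere
  have hFgrad : ∀ v, HasGradientAt F (F' v) v := by
    intro v
    have hfd : HasFDerivAt F
        ((InnerProductSpace.toDual ℝ (EuclideanSpace ℝ (Fin n))) (F' v)) v := by
      have : HasFDerivAt (fun w => ∑ i, p i * f i w)
          (∑ i, p i • (InnerProductSpace.toDual ℝ (EuclideanSpace ℝ (Fin n))) (f' i v)) v := by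
        apply HasFDerivAt.fun_sum
        intro i _
        exact ((hgrad i v).hasFDerivAt).const_mul (p i)
      have heq : F = fun w => ∑ i, p i * f i w := funext hF
      rw [heq, hF']
      simpa [map_sum, map_smul] using this
    exact (hasGradientAt_iff_hasFDerivAt).2 hfd
  -- gradient at minimizer is zero
  have hF'star : F' wstar = 0 := by
    have hloc : IsLocalMin F wstar := Filter.Eventually.of_forall hmin
    have := hloc.hasFDerivAt_eq_zero ((hFgrad wstar).hasFDerivAt)
    have h2 : (InnerProductSpace.toDual ℝ (EuclideanSpace ℝ (Fin n))) (F' wstar)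
        = (InnerProductSpace.toDual ℝ (EuclideanSpace ℝ (Fin n))) 0 := by
      simpa using this
    exact (InnerProductSpace.toDual ℝ (EuclideanSpace ℝ (Fin n))).injective h2
  -- strong convexity ⇒ μ‖w - w⋆‖ ≤ ‖F' w‖
  have hkey : μ * ‖w - wstar‖ ≤ ‖F' w‖ := by
    rcases eq_or_ne w wstar with h | h
    · simp [h, hF'star]
    · have hd : (0:ℝ) < ‖w - wstar‖ := by
        rw [norm_pos_iff, sub_ne_zero]; exact h
      have h1 := hsc w wstar
      have h2 : (inner ℝ (F' w - F' wstar) (w - wstar) : ℝ) ≤ ‖F' w‖ * ‖w - wstar‖ := by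
        calc (inner ℝ (F' w - F' wstar) (w - wstar) : ℝ)
            ≤ ‖F' w - F' wstar‖ * ‖w - wstar‖ := real_inner_le_norm _ _
          _ = ‖F' w‖ * ‖w - wstar‖ := by rw [hF'star, sub_zero]
      have := h1.trans h2
      nlinarith [hd]
  have hdistsq : μ ^ 2 * ‖w - wstar‖ ^ 2 ≤ ‖F' w‖ ^ 2 := by
    have h0 : 0 ≤ μ * ‖w - wstar‖ := mul_nonneg hμ.le (norm_nonneg _)
    nlinarith [hkey]
  -- per-sample bound: ‖f' i w‖² ≤ 2 Lξ i ² ‖w - w⋆‖² + 2 ‖f' i w⋆‖²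
  have hsample : ∀ i, ‖f' i w‖ ^ 2 ≤ 2 * (Lξ i) ^ 2 * ‖w - wstar‖ ^ 2 + 2 * ‖f' i wstar‖ ^ 2 := by
    intro i
    have h1 : ‖f' i w - f' i wstar‖ ^ 2 ≤ (Lξ i) ^ 2 * ‖w - wstar‖ ^ 2 := by
      have := hsmoothξ i w wstar
      nlinarith [norm_nonneg (f' i w - f' i wstar)]
    have h2 : ‖f' i w‖ ≤ ‖f' i w - f' i wstar‖ + ‖f' i wstar‖ := by
      simpa using norm_add_le (f' i w - f' i wstar) (f' i wstar)
    have h3 : ‖f' i w‖ ^ 2 ≤ (‖f' i w - f' i wstar‖ + ‖f' i wstar‖) ^ 2 := by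
      nlinarith [norm_nonneg (f' i w), norm_nonneg (f' i w - f' i wstar), norm_nonneg (f' i wstar)]
    nlinarith [sq_nonneg (‖f' i w - f' i wstar‖ - ‖f' i wstar‖)]
  -- variance identity
  have hvar : ∑ i, p i * ‖f' i w - F' w‖ ^ 2
      = (∑ i, p i * ‖f' i w‖ ^ 2) - ‖F' w‖ ^ 2 := by
    have hexp : ∀ i, ‖f' i w - F' w‖ ^ 2
        = ‖f' i w‖ ^ 2 - 2 * inner ℝ (f' i w) (F' w) + ‖F' w‖ ^ 2 := by
      intro i
      have := @norm_sub_sq_real (EuclideanSpace ℝ (Fin n)) _ _ (f' i w) (F' w)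
      linarith [this]
    have hinner : ∑ i, p i * (inner ℝ (f' i w) (F' w) : ℝ) = ‖F' w‖ ^ 2 := by
      have : (inner ℝ (F' w) (F' w) : ℝ) = ∑ i, p i * (inner ℝ (f' i w) (F' w) : ℝ) := by
        nth_rewrite 1 [hF' w]
        rw [sum_inner]
        exact Finset.sum_congr rfl fun i _ => real_inner_smul_left _ _ _
      rw [← this, real_inner_self_eq_norm_sq]
    calc ∑ i, p i * ‖f' i w - F' w‖ ^ 2
        = ∑ i, (p i * ‖f' i w‖ ^ 2 - 2 * (p i * inner ℝ (f' i w) (F' w)) + p i * ‖F' w‖ ^ 2) := by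
          apply Finset.sum_congr rfl; intro i _; rw [hexp i]; ring
      _ = (∑ i, p i * ‖f' i w‖ ^ 2) - 2 * (∑ i, p i * (inner ℝ (f' i w) (F' w) : ℝ))
            + (∑ i, p i) * ‖F' w‖ ^ 2 := by
          rw [Finset.sum_add_distrib, Finset.sum_sub_distrib, ← Finset.mul_sum,
            ← Finset.sum_mul]
      _ = (∑ i, p i * ‖f' i w‖ ^ 2) - ‖F' w‖ ^ 2 := by rw [hinner, hp1]; ring
  -- combine
  have hsum : ∑ i, p i * ‖f' i w‖ ^ 2
      ≤ 2 * (∑ i, p i * (Lξ i) ^ 2) * ‖w - wstar‖ ^ 2 + 2 * ∑ i, p i * ‖f' i wstar‖ ^ 2 := by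
    have : ∑ i, p i * ‖f' i w‖ ^ 2
        ≤ ∑ i, (2 * (p i * (Lξ i) ^ 2) * ‖w - wstar‖ ^ 2 + 2 * (p i * ‖f' i wstar‖ ^ 2)) := by
      apply Finset.sum_le_sum
      intro i _
      have := hsample i
      nlinarith [hp i]
    calc ∑ i, p i * ‖f' i w‖ ^ 2
        ≤ ∑ i, (2 * (p i * (Lξ i) ^ 2) * ‖w - wstar‖ ^ 2 + 2 * (p i * ‖f' i wstar‖ ^ 2)) := this
      _ = 2 * (∑ i, p i * (Lξ i) ^ 2) * ‖w - wstar‖ ^ 2 + 2 * ∑ i, p i * ‖f' i wstar‖ ^ 2 := by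
          simp only [Finset.sum_add_distrib, ← Finset.mul_sum, ← Finset.sum_mul]
  have hS : 0 ≤ ∑ i, p i * (Lξ i) ^ 2 :=
    Finset.sum_nonneg fun i _ => mul_nonneg (hp i) (sq_nonneg _)
  have hfinal : 2 * (∑ i, p i * (Lξ i) ^ 2) * ‖w - wstar‖ ^ 2
      ≤ 2 * (∑ i, p i * (Lξ i) ^ 2) / μ ^ 2 * ‖F' w‖ ^ 2 := by
    rw [div_mul_eq_mul_div, le_div_iff₀ (by positivity)]
    nlinarith [hdistsq, hS]
  rw [hvar]
  have : 2 * (∑ i, p i * (Lξ i) ^ 2) / μ ^ 2 * ‖F' w‖ ^ 2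
      = (2 * (∑ i, p i * (Lξ i) ^ 2) / μ ^ 2 - 1) * ‖F' w‖ ^ 2 + ‖F' w‖ ^ 2 := by ring
  linarith [hsum, hfinal]
end

section
/- For every μ ∈ (0, 1/2] there exists a two-point family of μ-strongly convex, 1-smooth quadratic functions f₁, f₂ on ℝ² with mean F (also μ-strongly convex and 1-smooth), such that for every V₀ ∈ ℝ there exists w ≠ w⋆ with Var(∇f_ξ(w)) > V₀ and (Var(∇f_ξ(w)) − V₀)/‖∇F(w)‖² ≥ (1−μ)³/(2μ(2−μ)²) ≥ 1/(64μ). -/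
open Matrix

/-- Squared Euclidean norm of a vector in ℝ². -/
def sqNorm2 (v : Fin 2 → ℝ) : ℝ := v 0 ^ 2 + v 1 ^ 2

set_option maxHeartbeats 1000000 in
theorem stmt_13 (μ : ℝ) (hμ : 0 < μ) (hμhalf : μ ≤ 1 / 2) :
    ∃ A : Fin 2 → Matrix (Fin 2) (Fin 2) ℝ,
      (∀ i, (A i).IsSymm) ∧
      -- each quadratic f_i(w) = ½ wᵀ A_i w is μ-strongly convex and 1-smooth:
      (∀ i (v : Fin 2 → ℝ), μ * sqNorm2 v ≤ v ⬝ᵥ (A i).mulVec v ∧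
        v ⬝ᵥ (A i).mulVec v ≤ sqNorm2 v) ∧
      -- the mean F(w) = ½ wᵀ Ā w (Ā = (A₁+A₂)/2) is μ-strongly convex and 1-smooth:
      (∀ v : Fin 2 → ℝ, μ * sqNorm2 v ≤ v ⬝ᵥ ((1 / 2 : ℝ) • (A 0 + A 1)).mulVec v ∧
        v ⬝ᵥ ((1 / 2 : ℝ) • (A 0 + A 1)).mulVec v ≤ sqNorm2 v) ∧
      ∀ V₀ : ℝ, ∃ w : Fin 2 → ℝ, w ≠ 0 ∧
        V₀ < (1 / 2 : ℝ) * (sqNorm2 ((A 0).mulVec w - ((1 / 2 : ℝ) • (A 0 + A 1)).mulVec w)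
            + sqNorm2 ((A 1).mulVec w - ((1 / 2 : ℝ) • (A 0 + A 1)).mulVec w)) ∧
        (1 - μ) ^ 3 / (2 * μ * (2 - μ) ^ 2) ≤
          ((1 / 2 : ℝ) * (sqNorm2 ((A 0).mulVec w - ((1 / 2 : ℝ) • (A 0 + A 1)).mulVec w)
            + sqNorm2 ((A 1).mulVec w - ((1 / 2 : ℝ) • (A 0 + A 1)).mulVec w)) - V₀)
            / sqNorm2 (((1 / 2 : ℝ) • (A 0 + A 1)).mulVec w) ∧
        1 / (64 * μ) ≤ (1 - μ) ^ 3 / (2 * μ * (2 - μ) ^ 2) := by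
  have hμ1 : μ < 1 := by linarith
  set s := Real.sqrt (μ * (1 - μ)) with hsdef
  have hs2 : s ^ 2 = μ * (1 - μ) := Real.sq_sqrt (by nlinarith)
  refine ⟨![!![μ*(2-μ), (1-μ)*s; (1-μ)*s, 1-μ+μ^2],
           !![μ*(2-μ), -((1-μ)*s); -((1-μ)*s), 1-μ+μ^2]], ?_, ?_, ?_, ?_⟩
  · rw [Fin.forall_fin_two]
    constructor <;> · ext i j; fin_cases i <;> fin_cases j <;> simp [Matrix.IsSymm]
  · rw [Fin.forall_fin_two]
    constructor <;> intro v <;>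
      simp only [Matrix.cons_val_zero, Matrix.cons_val_one, Matrix.head_cons, sqNorm2,
        mulVec, dotProduct, Fin.sum_univ_two, Matrix.cons_val', Matrix.empty_val',
        Matrix.cons_val_fin_one, Matrix.of_apply, Matrix.vecHead, Matrix.vecTail] <;> constructor
    · nlinarith [sq_nonneg (s * v 0 + (1-μ) * v 1)]
    · nlinarith [sq_nonneg ((1-μ) * v 0 - s * v 1)]
    · nlinarith [sq_nonneg (s * v 0 - (1-μ) * v 1)]
    · nlinarith [sq_nonneg ((1-μ) * v 0 + s * v 1)]
  · intro v
    simp only [Matrix.cons_val_zero, Matrix.cons_val_one, Matrix.head_cons, sqNorm2,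
      mulVec, dotProduct, Fin.sum_univ_two, Matrix.smul_apply, Matrix.add_apply,
      Matrix.cons_val', Matrix.empty_val', Matrix.cons_val_fin_one, Matrix.of_apply,
      Matrix.vecHead, Matrix.vecTail, smul_eq_mul]
    constructor
    · nlinarith [sq_nonneg (v 0), sq_nonneg (v 1)]
    · nlinarith [sq_nonneg (v 0), sq_nonneg (v 1)]
  · intro V₀
    have h2μ : (0:ℝ) < 2 - μ := by linarith
    have h2sq : (0:ℝ) < (2 - μ)^2 := by positivity
    set c : ℝ := μ * (1 - μ)^3 with hc
    have h1μ : (0:ℝ) < 1 - μ := by linarith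
    have hcpos : 0 < c := by rw [hc]; exact mul_pos hμ (pow_pos h1μ 3)
    set t : ℝ := Real.sqrt (1 + 2 * |V₀| / c) with ht
    have harg : (1:ℝ) ≤ 1 + 2 * |V₀| / c := by
      have : 0 ≤ 2 * |V₀| / c := by positivity
      linarith
    have ht2 : t ^ 2 = 1 + 2 * |V₀| / c := Real.sq_sqrt (by linarith)
    have htpos : 0 < t := Real.sqrt_pos.mpr (by linarith)
    have hct : c * t ^ 2 = c + 2 * |V₀| := by rw [ht2]; field_simp
    have habs : V₀ ≤ |V₀| := le_abs_self V₀
    have habs0 : 0 ≤ |V₀| := abs_nonneg V₀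
    have eV : (1-μ)^2 * s^2 * t^2 = c + 2 * |V₀| := by
      linear_combination (1-μ)^2*t^2*hs2 + hct - t^2*hc
    have eL : (1-μ)^3 * (μ^2*(2-μ)^2*t^2) = μ*(2-μ)^2*(c + 2*|V₀|) := by
      linear_combination μ*(2-μ)^2*hct - μ*(2-μ)^2*t^2*hc
    have eR : 2*μ*(2-μ)^2*((1-μ)^2 * s^2 * t^2) = 2*μ*(2-μ)^2*(c + 2*|V₀|) := by
      linear_combination 2*μ*(2-μ)^2*(1-μ)^2*t^2*hs2 + 2*μ*(2-μ)^2*hct - 2*μ*(2-μ)^2*t^2*hc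
    have e3 : 0 ≤ μ*(2-μ)^2*(c + 2*|V₀| - 2*V₀) :=
      mul_nonneg (by positivity) (by linarith)
    have hx : 0 < μ*(2-μ)*t := mul_pos (mul_pos hμ h2μ) htpos
    refine ⟨![t, 0], ?_, ?_, ?_, ?_⟩
    · intro h
      have := congrFun h 0
      simp at this
      exact htpos.ne' this
    · simp only [Matrix.cons_val_zero, Matrix.cons_val_one, Matrix.head_cons, sqNorm2,
        mulVec, dotProduct, Fin.sum_univ_two, Matrix.smul_apply, Matrix.add_apply,
        Matrix.cons_val', Matrix.empty_val', Matrix.cons_val_fin_one, Matrix.of_apply,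
        Matrix.vecHead, Matrix.vecTail, smul_eq_mul, Pi.sub_apply]
      nlinarith [eV, hcpos, habs, habs0]
    · simp only [Matrix.cons_val_zero, Matrix.cons_val_one, Matrix.head_cons, sqNorm2,
        mulVec, dotProduct, Fin.sum_univ_two, Matrix.smul_apply, Matrix.add_apply,
        Matrix.cons_val', Matrix.empty_val', Matrix.cons_val_fin_one, Matrix.of_apply,
        Matrix.vecHead, Matrix.vecTail, smul_eq_mul, Pi.sub_apply]
      rw [div_le_div_iff₀ (by positivity) (by nlinarith [mul_pos hx hx])]
      nlinarith [eL, eR, e3]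
    · rw [div_le_div_iff₀ (by positivity) (by positivity)]
      have h12 : (0:ℝ) ≤ 1 - 2*μ := by linarith
      nlinarith [h12, mul_nonneg h12 h12, mul_nonneg (mul_nonneg h12 h12) h12]
end

section
/- Let F : ℝⁿ → ℝ be μ-strongly convex and L-smooth with minimizer w⋆, and (f_ξ) a finite family with mean F, each f_ξ differentiable. Let w_{k+1} = w_k − α_k ∇f_{ξ_k}(w_k) with α_k = ‖∇F(w_k)‖²/(L·E[‖∇f_ξ(w_k)‖²]). Then E_{ξ_k}[F(w_{k+1})] − F(w⋆) ≤ (1 − μ·α_k)·(F(w_k) − F(w⋆)). -/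
open RealInnerProductSpace

section Aux
variable {E : Type*} [NormedAddCommGroup E] [InnerProductSpace ℝ E] [CompleteSpace E]

lemma aux_mono01 (h h' : ℝ → ℝ) (hd : ∀ t, HasDerivAt h (h' t) t)
    (hnn : ∀ t ∈ Set.Ioo (0:ℝ) 1, 0 ≤ h' t) : h 0 ≤ h 1 := by
  have hmono : MonotoneOn h (Set.Icc 0 1) := by
    apply monotoneOn_of_deriv_nonneg (convex_Icc 0 1)
    · exact fun t _ => (hd t).continuousAt.continuousWithinAt
    · intro t ht
      exact ((hd t).differentiableAt).differentiableWithinAt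
    · intro t ht
      rw [interior_Icc] at ht
      rw [(hd t).deriv]
      exact hnn t ht
  exact hmono (by norm_num) (by norm_num) zero_le_one

lemma aux_line_deriv (F : E → ℝ) (F' : E → E) (hgrad : ∀ w, HasGradientAt F (F' w) w)
    (x v : E) (t : ℝ) :
    HasDerivAt (fun t : ℝ => F (x + t • v)) ⟪F' (x + t • v), v⟫ t := by
  have hline : HasDerivAt (fun t : ℝ => x + t • v) v t := by
    simpa using ((hasDerivAt_id t).smul_const v).const_add x
  have h1 := (hgrad (x + t • v)).hasFDerivAt
  have := h1.comp_hasDerivAt t hline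
  simp only [InnerProductSpace.toDual_apply_apply] at this
  exact this

/-- Descent lemma. -/
lemma aux_descent (F : E → ℝ) (F' : E → E) (hgrad : ∀ w, HasGradientAt F (F' w) w)
    (L : ℝ) (hsmooth : ∀ w₁ w₂, ‖F' w₁ - F' w₂‖ ≤ L * ‖w₁ - w₂‖) (x y : E) :
    F y ≤ F x + ⟪F' x, y - x⟫ + L / 2 * ‖y - x‖ ^ 2 := by
  set v := y - x with hv
  set c : ℝ := ⟪F' x, v⟫ with hc
  set B : ℝ := ‖v‖ ^ 2 with hB
  set h : ℝ → ℝ := fun t => F x + t * c + L / 2 * t ^ 2 * B - F (x + t • v) with hh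
  have hd : ∀ t, HasDerivAt h (c + L / 2 * (2 * t) * B - ⟪F' (x + t • v), v⟫) t := by
    intro t
    have h1 : HasDerivAt (fun t : ℝ => F x + t * c) c t := by
      simpa using ((hasDerivAt_id t).mul_const c).const_add (F x)
    have h2 : HasDerivAt (fun t : ℝ => L / 2 * t ^ 2 * B) (L / 2 * (2 * t) * B) t := by
      simpa [mul_comm, mul_assoc, mul_left_comm] using
        (((hasDerivAt_pow 2 t).const_mul (L / 2)).mul_const B)
    exact (h1.add h2).sub (aux_line_deriv F F' hgrad x v t)
  have hnn : ∀ t ∈ Set.Ioo (0:ℝ) 1, 0 ≤ c + L / 2 * (2 * t) * B - ⟪F' (x + t • v), v⟫ := by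
    intro t ht
    have key : ⟪F' (x + t • v) - F' x, v⟫ ≤ L * t * B := by
      calc ⟪F' (x + t • v) - F' x, v⟫ ≤ ‖F' (x + t • v) - F' x‖ * ‖v‖ :=
            real_inner_le_norm _ _
        _ ≤ L * ‖(x + t • v) - x‖ * ‖v‖ := by
            apply mul_le_mul_of_nonneg_right (hsmooth _ _) (norm_nonneg _)
        _ = L * t * B := by
            rw [hB]
            have : (x + t • v) - x = t • v := by abel
            rw [this, norm_smul, Real.norm_eq_abs, abs_of_pos ht.1]
            ring
    have hexp : ⟪F' (x + t • v), v⟫ = ⟪F' (x + t • v) - F' x, v⟫ + c := by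
      rw [hc, inner_sub_left]; ring
    rw [hexp]
    nlinarith [key]
  have := aux_mono01 h _ hd hnn
  simp only [hh] at this
  have h0 : F (x + (0:ℝ) • v) = F x := by norm_num
  have h1 : F (x + (1:ℝ) • v) = F y := by rw [one_smul, hv]; congr 1; abel
  rw [h0, h1] at this
  nlinarith [this]

/-- Strong convexity lower bound. -/
lemma aux_lower (F : E → ℝ) (F' : E → E) (hgrad : ∀ w, HasGradientAt F (F' w) w)
    (μ : ℝ) (hsc : ∀ w₁ w₂, μ * ‖w₁ - w₂‖ ^ 2 ≤ ⟪F' w₁ - F' w₂, w₁ - w₂⟫) (x y : E) :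
    F x + ⟪F' x, y - x⟫ + μ / 2 * ‖y - x‖ ^ 2 ≤ F y := by
  set v := y - x with hv
  set c : ℝ := ⟪F' x, v⟫ with hc
  set B : ℝ := ‖v‖ ^ 2 with hB
  set h : ℝ → ℝ := fun t => F (x + t • v) - (F x + t * c + μ / 2 * t ^ 2 * B) with hh
  have hd : ∀ t, HasDerivAt h (⟪F' (x + t • v), v⟫ - (c + μ / 2 * (2 * t) * B)) t := by
    intro t
    have h1 : HasDerivAt (fun t : ℝ => F x + t * c) c t := by
      simpa using ((hasDerivAt_id t).mul_const c).const_add (F x)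
    have h2 : HasDerivAt (fun t : ℝ => μ / 2 * t ^ 2 * B) (μ / 2 * (2 * t) * B) t := by
      simpa [mul_comm, mul_assoc, mul_left_comm] using
        (((hasDerivAt_pow 2 t).const_mul (μ / 2)).mul_const B)
    exact (aux_line_deriv F F' hgrad x v t).sub (h1.add h2)
  have hnn : ∀ t ∈ Set.Ioo (0:ℝ) 1, 0 ≤ ⟪F' (x + t • v), v⟫ - (c + μ / 2 * (2 * t) * B) := by
    intro t ht
    have key := hsc (x + t • v) x
    have heq : (x + t • v) - x = t • v := by abel
    rw [heq, real_inner_smul_right, norm_smul, Real.norm_eq_abs, abs_of_pos ht.1,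
      inner_sub_left] at key
    have hinner : t * ⟪F' (x + t • v), v⟫ - t * c ≥ μ * (t * ‖v‖) ^ 2 := by
      rw [hc]; nlinarith [key]
    have ht0 : 0 < t := ht.1
    rw [hB]
    nlinarith [hinner]
  have := aux_mono01 h _ hd hnn
  simp only [hh] at this
  have h0 : F (x + (0:ℝ) • v) = F x := by norm_num
  have h1 : F (x + (1:ℝ) • v) = F y := by rw [one_smul, hv]; congr 1; abel
  rw [h0, h1] at this
  nlinarith [this]

end Aux

theorem stmt_17 {n : ℕ}
    {ι : Type*} [Fintype ι] (p : ι → ℝ) (hp : ∀ i, 0 ≤ p i) (hp1 : ∑ i, p i = 1)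
    (f : ι → EuclideanSpace ℝ (Fin n) → ℝ)
    (f' : ι → EuclideanSpace ℝ (Fin n) → EuclideanSpace ℝ (Fin n))
    (μ L : ℝ) (hμ : 0 < μ)
    (hgradξ : ∀ i w, HasGradientAt (f i) (f' i w) w)
    (F : EuclideanSpace ℝ (Fin n) → ℝ) (hF : ∀ w, F w = ∑ i, p i * f i w)
    (F' : EuclideanSpace ℝ (Fin n) → EuclideanSpace ℝ (Fin n))
    (hF' : ∀ w, F' w = ∑ i, p i • f' i w)
    (hgrad : ∀ w, HasGradientAt F (F' w) w)
    (hsc : ∀ w₁ w₂, μ * ‖w₁ - w₂‖ ^ 2 ≤ inner ℝ (F' w₁ - F' w₂) (w₁ - w₂))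
    (hsmooth : ∀ w₁ w₂, ‖F' w₁ - F' w₂‖ ≤ L * ‖w₁ - w₂‖)
    (wstar : EuclideanSpace ℝ (Fin n)) (hmin : ∀ w, F wstar ≤ F w)
    (wk : EuclideanSpace ℝ (Fin n))
    (hpos : 0 < ∑ i, p i * ‖f' i wk‖ ^ 2)
    (αk : ℝ) (hαk : αk = ‖F' wk‖ ^ 2 / (L * ∑ i, p i * ‖f' i wk‖ ^ 2)) :
    (∑ i, p i * F (wk - αk • f' i wk)) - F wstar ≤
      (1 - μ * αk) * (F wk - F wstar) := by
  set S : ℝ := ∑ i, p i * ‖f' i wk‖ ^ 2 with hS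
  set G : ℝ := ‖F' wk‖ ^ 2 with hG
  -- L is positive, else there exist i with f' i wk ≠ 0 yet the space is a point
  have hL : 0 < L := by
    by_contra hL
    push_neg at hL
    -- then F' is constant, and strong convexity forces the space to be trivial
    have htriv : ∀ w : EuclideanSpace ℝ (Fin n), w = 0 := by
      intro w
      have h1 := hsc w 0
      have h2 := hsmooth w 0
      have h3 : ‖F' w - F' 0‖ ≤ 0 := h2.trans (by nlinarith [norm_nonneg (w - (0:EuclideanSpace ℝ (Fin n)))])
      have h4 : F' w - F' 0 = 0 := by
        rw [← norm_le_zero_iff]; exact h3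
      rw [h4] at h1
      simp only [inner_zero_left] at h1
      have : ‖w - 0‖ ^ 2 ≤ 0 := by nlinarith
      have : w - 0 = 0 := by rw [← norm_le_zero_iff]; nlinarith [norm_nonneg (w - (0:EuclideanSpace ℝ (Fin n)))]
      simpa using this
    have : S = 0 := by
      rw [hS]
      apply Finset.sum_eq_zero
      intro i _
      rw [htriv (f' i wk)]
      simp
    rw [this] at hpos; exact lt_irrefl 0 hpos
  have hαnn : 0 ≤ αk := by
    rw [hαk]
    positivity
  have hαLS : αk * (L * S) = G := by
    rw [hαk]
    field_simp
  -- weighted sum of gradients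
  have hinner_sum : ∑ i, p i * ⟪F' wk, f' i wk⟫ = G := by
    have h1 : ⟪F' wk, ∑ i, p i • f' i wk⟫ = ∑ i, p i * ⟪F' wk, f' i wk⟫ := by
      rw [inner_sum]
      exact Finset.sum_congr rfl fun i _ => real_inner_smul_right _ _ _
    rw [← h1, ← hF', real_inner_self_eq_norm_sq, hG]
  -- descent lemma applied to each i
  have hdesc : ∀ i, F (wk - αk • f' i wk) ≤
      F wk - αk * ⟪F' wk, f' i wk⟫ + L / 2 * αk ^ 2 * ‖f' i wk‖ ^ 2 := by
    intro i
    have := aux_descent F F' hgrad L hsmooth wk (wk - αk • f' i wk)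
    have heq : wk - αk • f' i wk - wk = -(αk • f' i wk) := by abel
    rw [heq] at this
    rw [inner_neg_right, real_inner_smul_right, norm_neg, norm_smul, Real.norm_eq_abs,
      abs_of_nonneg hαnn, mul_pow] at this
    calc F (wk - αk • f' i wk) ≤ F wk + -(αk * ⟪F' wk, f' i wk⟫) + L / 2 * (αk ^ 2 * ‖f' i wk‖ ^ 2) := this
      _ = F wk - αk * ⟪F' wk, f' i wk⟫ + L / 2 * αk ^ 2 * ‖f' i wk‖ ^ 2 := by ring
  -- sum the descent inequalities
  have hsum : ∑ i, p i * F (wk - αk • f' i wk) ≤ F wk - αk * G + L / 2 * αk ^ 2 * S := by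
    have expand : ∑ i, p i * (F wk - αk * ⟪F' wk, f' i wk⟫ + L / 2 * αk ^ 2 * ‖f' i wk‖ ^ 2)
        = (∑ i, p i) * F wk - αk * ∑ i, p i * ⟪F' wk, f' i wk⟫
          + L / 2 * αk ^ 2 * ∑ i, p i * ‖f' i wk‖ ^ 2 := by
      rw [Finset.sum_mul, Finset.mul_sum, Finset.mul_sum, ← Finset.sum_sub_distrib,
        ← Finset.sum_add_distrib]
      exact Finset.sum_congr rfl fun i _ => by ring
    calc ∑ i, p i * F (wk - αk • f' i wk)
        ≤ ∑ i, p i * (F wk - αk * ⟪F' wk, f' i wk⟫ + L / 2 * αk ^ 2 * ‖f' i wk‖ ^ 2) :=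
          Finset.sum_le_sum fun i _ => mul_le_mul_of_nonneg_left (hdesc i) (hp i)
      _ = F wk - αk * G + L / 2 * αk ^ 2 * S := by
          rw [expand, hp1, hinner_sum, ← hS, one_mul]
  -- L/2 αk² S = αk/2 G
  have hstep : L / 2 * αk ^ 2 * S = αk / 2 * G := by
    rw [← hαLS]; ring
  -- PL inequality: G ≥ 2μ (F wk - F wstar)
  have hPL : 2 * μ * (F wk - F wstar) ≤ G := by
    have hlow := aux_lower F F' hgrad μ hsc wk wstar
    set I : ℝ := ⟪F' wk, wstar - wk⟫ with hI
    set a : ℝ := ‖F' wk‖ with ha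
    set b : ℝ := ‖wstar - wk‖ with hb
    have hCS : -(a * b) ≤ I := by
      have := real_inner_le_norm (F' wk) (-(wstar - wk))
      rw [inner_neg_right, norm_neg] at this
      rw [hI, ha, hb]
      linarith
    have hlow' : F wk - F wstar ≤ -I - μ / 2 * b ^ 2 := by linarith [hlow]
    have e1 : 2 * μ * (F wk - F wstar) ≤ 2 * μ * (-I - μ / 2 * b ^ 2) :=
      mul_le_mul_of_nonneg_left hlow' (by linarith)
    have e2 : 2 * μ * (-(a * b)) ≤ 2 * μ * I :=
      mul_le_mul_of_nonneg_left hCS (by linarith)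
    have hGa : G = a ^ 2 := by rw [hG, ha]
    rw [hGa]
    nlinarith [e1, e2, sq_nonneg (a - μ * b)]
  have hA : 0 ≤ F wk - F wstar := by linarith [hmin wk]
  have hfinal : ∑ i, p i * F (wk - αk • f' i wk) ≤ F wk - αk * μ * (F wk - F wstar) := by
    have h1 : αk / 2 * (2 * μ * (F wk - F wstar)) ≤ αk / 2 * G :=
      mul_le_mul_of_nonneg_left hPL (by linarith)
    calc ∑ i, p i * F (wk - αk • f' i wk) ≤ F wk - αk * G + αk / 2 * G := by
          rw [← hstep]; exact hsum
      _ = F wk - αk / 2 * G := by ring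
      _ ≤ F wk - αk / 2 * (2 * μ * (F wk - F wstar)) := by linarith
      _ = F wk - αk * μ * (F wk - F wstar) := by ring
  linarith [hfinal]
end
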